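/- With the MCAM transition probabilities, the per-step covariance of the increment divided by the holding time converges to σ_w² I as h → 0⁺: lim_{h→0⁺} Cov[Δs | s,θ] / Δt_h(s) = σ_w² I₄ (componentwise, where Δs is the one-step increment random vector), for any fixed s and θ with bounded drift. -/

import Mathlib

/-!
With `b⁺ = max b 0` and `b⁻ = max (-b) 0`, the identities `b⁺ - b⁻ = b` and `b⁺ + b⁻ = |b|` make
the mean and second moment of `Δs` equal to `h² b / Q_h` and `δ_il h² (σ_w² + h |b_i|) / Q_h`.
Hence for `h > 0` the ratio `Cov / Δt_h = Cov · Q_h / h²` is exactly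
`δ_il (σ_w² + h |b_i|) - h² b_i b_l / Q_h`, which is continuous at `h = 0` because
`Q_0 = 4 σ_w² > 0`, with value `σ_w² δ_il` there.
-/

open Finset Filter

/-- Standard basis vectors of ℝ⁴. -/
noncomputable def stdBasis (j : Fin 4) : Fin 4 → ℝ := Pi.single j 1

/-- MCAM normalizing constant `Q_h(s) = h·max_θ Σ_j |b_j(s,θ)| + 4σ_w²`. -/
noncomputable def Qh {S Θ : Type*} [Fintype Θ] [Nonempty Θ]
    (b : S → Θ → Fin 4 → ℝ) (σw h : ℝ) (s : S) : ℝ :=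
  h * (Finset.univ.sup' Finset.univ_nonempty (fun θ : Θ => ∑ j : Fin 4, |b s θ j|))
    + 4 * σw ^ 2

/-- MCAM holding time `Δt_h(s) = h²/Q_h(s)`. -/
noncomputable def Δth {S Θ : Type*} [Fintype Θ] [Nonempty Θ]
    (b : S → Θ → Fin 4 → ℝ) (σw h : ℝ) (s : S) : ℝ :=
  h ^ 2 / Qh b σw h s

/-- Probability of moving to `s + h e_j`. -/
noncomputable def Pplus {S Θ : Type*} [Fintype Θ] [Nonempty Θ]
    (b : S → Θ → Fin 4 → ℝ) (σw h : ℝ) (s : S) (θ : Θ) (j : Fin 4) : ℝ :=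
  (σw ^ 2 / 2 + h * max (b s θ j) 0) / Qh b σw h s

/-- Probability of moving to `s - h e_j`. -/
noncomputable def Pminus {S Θ : Type*} [Fintype Θ] [Nonempty Θ]
    (b : S → Θ → Fin 4 → ℝ) (σw h : ℝ) (s : S) (θ : Θ) (j : Fin 4) : ℝ :=
  (σw ^ 2 / 2 + h * max (-(b s θ j)) 0) / Qh b σw h s

/-- Mean of the one-step increment `Δs` (component `i`): `Δs = ±h e_j` with
probability `P_h(s ± h e_j|s,θ)` and `0` otherwise. -/
noncomputable def meanInc {S Θ : Type*} [Fintype Θ] [Nonempty Θ]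
    (b : S → Θ → Fin 4 → ℝ) (σw h : ℝ) (s : S) (θ : Θ) (i : Fin 4) : ℝ :=
  ∑ j : Fin 4, (h * stdBasis j i) * (Pplus b σw h s θ j - Pminus b σw h s θ j)

/-- Second moment `E[Δs Δsᵀ]` (entry `(i,l)`). -/
noncomputable def secondMomentInc {S Θ : Type*} [Fintype Θ] [Nonempty Θ]
    (b : S → Θ → Fin 4 → ℝ) (σw h : ℝ) (s : S) (θ : Θ) (i l : Fin 4) : ℝ :=
  ∑ j : Fin 4, (h ^ 2 * stdBasis j i * stdBasis j l) * (Pplus b σw h s θ j + Pminus b σw h s θ j)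

/-- Covariance `Cov[Δs] = E[Δs Δsᵀ] − E[Δs]E[Δs]ᵀ` (entry `(i,l)`). -/
noncomputable def covInc {S Θ : Type*} [Fintype Θ] [Nonempty Θ]
    (b : S → Θ → Fin 4 → ℝ) (σw h : ℝ) (s : S) (θ : Θ) (i l : Fin 4) : ℝ :=
  secondMomentInc b σw h s θ i l - meanInc b σw h s θ i * meanInc b σw h s θ l

section Increments

variable {S Θ : Type*} [Fintype Θ] [Nonempty Θ] (b : S → Θ → Fin 4 → ℝ) (σw h : ℝ) (s : S)

lemma Qh_pos (hσ : σw ≠ 0) (hh : 0 ≤ h) : 0 < Qh b σw h s := by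
  have hmax : 0 ≤ univ.sup' univ_nonempty (fun θ : Θ => ∑ j : Fin 4, |b s θ j|) :=
    le_sup'_of_le _ (mem_univ (Classical.arbitrary Θ)) (by positivity)
  unfold Qh
  positivity

@[fun_prop]
lemma continuous_Qh : Continuous fun h : ℝ => Qh b σw h s := by
  unfold Qh
  fun_prop

variable (θ : Θ)

lemma Pplus_sub_Pminus (j : Fin 4) :
    Pplus b σw h s θ j - Pminus b σw h s θ j = h * b s θ j / Qh b σw h s := by
  have hpart : max (b s θ j) 0 - max (-b s θ j) 0 = b s θ j := posPart_sub_negPart _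
  rw [Pplus, Pminus, ← sub_div]
  congr 1
  linear_combination h * hpart

lemma Pplus_add_Pminus (j : Fin 4) :
    Pplus b σw h s θ j + Pminus b σw h s θ j = (σw ^ 2 + h * |b s θ j|) / Qh b σw h s := by
  have hpart : max (b s θ j) 0 + max (-b s θ j) 0 = |b s θ j| := posPart_add_negPart _
  rw [Pplus, Pminus, ← add_div]
  congr 1
  linear_combination h * hpart

lemma meanInc_eq (i : Fin 4) : meanInc b σw h s θ i = h ^ 2 * b s θ i / Qh b σw h s := by
  simp only [meanInc, stdBasis, Pi.single_apply, mul_ite, mul_one, mul_zero, Pplus_sub_Pminus, ite_mul,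
    zero_mul, sum_ite_eq, mem_univ, ↓reduceIte]
  ring

lemma secondMomentInc_eq (i l : Fin 4) :
    secondMomentInc b σw h s θ i l =
      h ^ 2 * (σw ^ 2 + h * |b s θ i|) / Qh b σw h s * (if i = l then 1 else 0) := by
  simp only [secondMomentInc, stdBasis, Pi.single_apply, mul_ite, mul_one, mul_zero, Pplus_add_Pminus,
    ite_mul, zero_mul, sum_ite_eq, mem_univ, ↓reduceIte]
  split_ifs with hil
  · subst hil
    ring
  · rfl

lemma covInc_div_Δth (hh : h ≠ 0) (hQ : Qh b σw h s ≠ 0) (i l : Fin 4) :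
    covInc b σw h s θ i l / Δth b σw h s =
      (σw ^ 2 + h * |b s θ i|) * (if i = l then 1 else 0) - h ^ 2 * (b s θ i * b s θ l) / Qh b σw h s := by
  rw [covInc, Δth, secondMomentInc_eq, meanInc_eq, meanInc_eq]
  field_simp

end Increments

/-- Local consistency of the diffusion: the per-step covariance of the increment
divided by the holding time converges componentwise to `σ_w² I₄` as `h → 0⁺`. -/
theorem mcam_covariance_limit {S Θ : Type*} [Fintype Θ] [Nonempty Θ]
    (b : S → Θ → Fin 4 → ℝ) (σw : ℝ) (hσ : 0 < σw) (s : S) (θ : Θ) :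
    ∀ i l : Fin 4,
      Tendsto (fun h : ℝ => covInc b σw h s θ i l / Δth b σw h s)
        (nhdsWithin 0 (Set.Ioi 0))
        (nhds (σw ^ 2 * (if i = l then (1 : ℝ) else 0))) := by
  intro i l
  refine Tendsto.congr' (eventually_nhdsWithin_of_forall fun h (hh : 0 < h) =>
    (covInc_div_Δth b σw h s θ hh.ne' (Qh_pos b σw h s hσ.ne' hh.le).ne' i l).symm) ?_
  have hQ0 : Qh b σw 0 s ≠ 0 := (Qh_pos b σw 0 s hσ.ne' le_rfl).ne'
  apply tendsto_nhdsWithin_of_tendsto_nhds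
  convert ContinuousAt.tendsto ?_ using 2
  · simp
  · fun_prop (disch := exact hQ0)
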